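/- Let B be a Boolean algebra, let f : (Fin n → B) → B be a join-hemimorphism in each argument, let g₁, …, gₙ : B → B be unary join-hemimorphisms, and let c ∈ B. If f(g₁ x, …, gₙ x) ≤ x holds for every x ∈ B with x ≤ c, then for all prime filters F and G of B such that c ∈ G and such that there exists a family H : Fin n → Set B of prime filters with (gᵢ a ∈ H i for every i and every a ∈ G) and (f b ∈ F for every tuple b : Fin n → B with b i ∈ H i for all i), it follows that F = G. -/

import Mathlib

/-- A prime filter of a Boolean algebra. -/
def IsPrimeFilter {B : Type*} [BooleanAlgebra B] (F : Set B) : Prop :=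
  ⊤ ∈ F ∧ ⊥ ∉ F ∧ (∀ x y : B, x ∈ F → x ≤ y → y ∈ F) ∧
    (∀ x y : B, x ∈ F → y ∈ F → x ⊓ y ∈ F) ∧
    (∀ x y : B, x ⊔ y ∈ F → x ∈ F ∨ y ∈ F)

/-- A unary join-hemimorphism. -/
def IsJoinHemi {B : Type*} [BooleanAlgebra B] (g : B → B) : Prop :=
  (∀ x y : B, g (x ⊔ y) = g x ⊔ g y) ∧ g ⊥ = ⊥

/-- A map `(Fin n → B) → B` which is a join-hemimorphism in each argument. -/
def IsJoinHemiN {B : Type*} [BooleanAlgebra B] {n : ℕ} (g : (Fin n → B) → B) : Prop :=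
  (∀ (i : Fin n) (x : Fin n → B) (a b : B),
      g (Function.update x i (a ⊔ b)) =
        g (Function.update x i a) ⊔ g (Function.update x i b)) ∧
  (∀ (i : Fin n) (x : Fin n → B), x i = ⊥ → g x = ⊥)

namespace IsPrimeFilter

variable {B : Type*} [BooleanAlgebra B] {F G : Set B}

theorem mem_of_le (hF : IsPrimeFilter F) {x y : B} (hx : x ∈ F) (hxy : x ≤ y) : y ∈ F :=
  hF.2.2.1 x y hx hxy

theorem inf_mem (hF : IsPrimeFilter F) {x y : B} (hx : x ∈ F) (hy : y ∈ F) : x ⊓ y ∈ F :=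
  hF.2.2.2.1 x y hx hy

theorem mem_or_compl_mem (hF : IsPrimeFilter F) (x : B) : x ∈ F ∨ xᶜ ∈ F :=
  hF.2.2.2.2 x xᶜ (by rw [sup_compl_eq_top]; exact hF.1)

theorem compl_notMem (hF : IsPrimeFilter F) {x : B} (hx : x ∈ F) : xᶜ ∉ F := fun hxc =>
  hF.2.1 (by simpa only [inf_compl_eq_bot] using hF.inf_mem hx hxc)

theorem eq_of_subset (hF : IsPrimeFilter F) (hG : IsPrimeFilter G) (hGF : G ⊆ F) : F = G :=
  hGF.antisymm' fun x hxF =>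
    (hG.mem_or_compl_mem x).resolve_right fun hxcG => hF.compl_notMem hxF (hGF hxcG)

end IsPrimeFilter

theorem stmt_5_general {B : Type*} [BooleanAlgebra B] {n : ℕ}
    (f : (Fin n → B) → B)
    (g : Fin n → B → B)
    (c : B)
    (hax : ∀ x : B, x ≤ c → f (fun i => g i x) ≤ x)
    (F G : Set B) (hF : IsPrimeFilter F) (hG : IsPrimeFilter G)
    (hcG : c ∈ G)
    (hcomp : ∃ H : Fin n → Set B, (∀ i, IsPrimeFilter (H i)) ∧
      (∀ (i : Fin n), ∀ a ∈ G, g i a ∈ H i) ∧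
      (∀ b : Fin n → B, (∀ i, b i ∈ H i) → f b ∈ F)) :
    F = G := by
  obtain ⟨H, -, hgH, hfF⟩ := hcomp
  refine hF.eq_of_subset hG fun a haG => ?_
  -- `f (g (a ⊓ c))` lies in `F` and, by the axiom at `a ⊓ c ≤ c`, below `a`.
  have hacG : a ⊓ c ∈ G := hG.inf_mem haG hcG
  exact hF.mem_of_le (hfF _ fun i => hgH i _ hacG) ((hax _ inf_le_right).trans inf_le_left)

theorem stmt_5 {B : Type*} [BooleanAlgebra B] {n : ℕ}
    (f : (Fin n → B) → B) (hf : IsJoinHemiN f)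
    (g : Fin n → B → B) (hg : ∀ i, IsJoinHemi (g i))
    (c : B)
    (hax : ∀ x : B, x ≤ c → f (fun i => g i x) ≤ x)
    (F G : Set B) (hF : IsPrimeFilter F) (hG : IsPrimeFilter G)
    (hcG : c ∈ G)
    (hcomp : ∃ H : Fin n → Set B, (∀ i, IsPrimeFilter (H i)) ∧
      (∀ (i : Fin n), ∀ a ∈ G, g i a ∈ H i) ∧
      (∀ b : Fin n → B, (∀ i, b i ∈ H i) → f b ∈ F)) :
    F = G :=
  stmt_5_general f g c hax F G hF hG hcG hcomp
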